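/- Let X = (X_k)_{k∈ℕ} be a sequence of independent integrable real random variables with E[X_k] = 0 for every k, let X̂ = (X̂_k)_{k∈ℕ} be an independent copy of X, and let I be uniformly distributed on {1,…,m}, with X, X̂, I mutually independent. Define X^{(I)}_k = X_k·1{I ≠ k} + X̂_k·1{I = k} for k ∈ {1,…,m}. Then for every integer p with 1 ≤ p ≤ m and every kernel f of order p whose support is contained in {1,…,m}^p, almost surely E[ Q_p(f; (X^{(I)}_k)_{k∈[m]}) | σ(X) ] = (1 − p/m) · Q_p(f; X). -/

import Mathlib

open MeasureTheory ProbabilityTheory Filter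
open scoped ENNReal NNReal

def IsKernel {p : ℕ} (f : (Fin p → ℕ) → ℝ) : Prop :=
  (∀ (σ : Equiv.Perm (Fin p)) (i : Fin p → ℕ), f (i ∘ σ) = f i) ∧
  (∀ i : Fin p → ℕ, ¬ Function.Injective i → f i = 0)

/-- `Q_p(f; X)` for a kernel supported in `{0, …, m-1}^p` (the paper's `{1, …, m}^p`, shifted). -/
noncomputable def homSum {Ω : Type*} (p m : ℕ) (f : (Fin p → ℕ) → ℝ)
    (X : ℕ → Ω → ℝ) (ω : Ω) : ℝ :=
  ∑ i : Fin p → Fin m, f (fun k => (i k : ℕ)) * ∏ k, X (i k : ℕ) ω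

/-!
Split `∏_{k ∈ S} X^{(I)}_k` according to which coordinate of `S`, if any, equals `I`:
it is `∏_S X · (1 - ∑_{j ∈ S} 1{I = j}) + ∑_{j ∈ S} ∏_{S \ {j}} X · 1{I = j} X̂_j`.
In each term the `X`-factor is `σ(X)`-measurable and the other factor is `σ(X̂, I)`-measurable,
and these σ-algebras are independent, so conditioning on `σ(X)` replaces the second factors by
their means `1 - |S|/m` and `P(I = j) E[X̂_j] = 0`. As `f` vanishes off injective tuples, only
sets `S` with `|S| = p` contribute to `Q_p`.
-/

theorem Finset.prod_ite_eq_add_sum {ι α R : Type*} [DecidableEq ι] [DecidableEq α] [CommRing R]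
    (s : Finset ι) {e : ι → α} (he : Set.InjOn e s) (c : α) (x y : ι → R) :
    ∏ k ∈ s, (if c = e k then y k else x k)
      = (∏ k ∈ s, x k) * (1 - ∑ j ∈ s, if c = e j then 1 else 0)
        + ∑ j ∈ s, (∏ k ∈ s.erase j, x k) * (if c = e j then y j else 0) := by
  by_cases hc : ∃ j ∈ s, c = e j
  · obtain ⟨j, hj, rfl⟩ := hc
    have hne : ∀ k ∈ s, k ≠ j → e j ≠ e k := fun k hk hkj h => hkj (he hk hj h.symm)
    rw [Finset.sum_eq_single_of_mem j hj fun k hk hkj => if_neg (hne k hk hkj),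
      Finset.sum_eq_single_of_mem j hj fun k hk hkj => by rw [if_neg (hne k hk hkj), mul_zero],
      ← Finset.mul_prod_erase s _ hj,
      Finset.prod_congr rfl fun k hk => if_neg (hne k (Finset.mem_of_mem_erase hk)
        (Finset.ne_of_mem_erase hk))]
    simp only [↓reduceIte]
    ring
  · push Not at hc
    simp +contextual [hc]

namespace ProbabilityTheory

section IndependentFactor

variable {Ω : Type*} {m₁ m₂ : MeasurableSpace Ω} [mΩ : MeasurableSpace Ω] {μ : Measure Ω}
  {A Z : Ω → ℝ}

theorem Indep.integrable_mul (hind : Indep m₁ m₂ μ) (hA : Measurable[m₁] A)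
    (hZ : Measurable[m₂] Z) (hAi : Integrable A μ) (hZi : Integrable Z μ) :
    Integrable (A * Z) μ :=
  ((IndepFun_iff_Indep A Z μ).mpr (indep_of_indep_of_le_right
    (indep_of_indep_of_le_left hind hA.comap_le) hZ.comap_le)).integrable_mul hAi hZi

theorem Indep.condExp_mul (hm₁ : m₁ ≤ mΩ) (hm₂ : m₂ ≤ mΩ)
    [SigmaFinite (μ.trim hm₁)] (hind : Indep m₁ m₂ μ) (hA : Measurable[m₁] A)
    (hZ : Measurable[m₂] Z) (hAi : Integrable A μ) (hZi : Integrable Z μ) :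
    μ[A * Z | m₁] =ᵐ[μ] fun ω => A ω * ∫ x, Z x ∂μ := by
  have hZs : StronglyMeasurable[m₂] Z := hZ.stronglyMeasurable
  have hAs : StronglyMeasurable[m₁] A := hA.stronglyMeasurable
  filter_upwards
    [condExp_mul_of_stronglyMeasurable_left hAs (hind.integrable_mul hA hZ hAi hZi) hZi,
      condExp_indep_eq hm₂ hm₁ hZs hind.symm] with ω hmul hZ
  rw [hmul, Pi.mul_apply, hZ]

end IndependentFactor

variable {Ω : Type*} [MeasurableSpace Ω] {μ : Measure Ω}

theorem iIndepFun.indep_iSup_comap_sumElim {ι κ β : Type*}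
    [mβ : MeasurableSpace β] {f : ι → Ω → β} {g : κ → Ω → β}
    (h : iIndepFun (Sum.elim f g) μ) (hf : ∀ i, Measurable (f i)) (hg : ∀ j, Measurable (g j)) :
    Indep (⨆ i, mβ.comap (f i)) (⨆ j, mβ.comap (g j)) μ := by
  have hdisj : Disjoint (Set.range (Sum.inl : ι → ι ⊕ κ)) (Set.range Sum.inr) :=
    Set.disjoint_range_iff.mpr fun _ _ => Sum.inl_ne_inr
  have hm : ∀ i, Measurable (Sum.elim f g i) := fun i => Sum.rec hf hg i
  have := indep_iSup_of_disjoint (fun i => (hm i).comap_le) h.iIndep hdisj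
  rwa [iSup_range, iSup_range] at this

theorem iIndepFun.integrable_finsetProd {ι : Type*} {f : ι → Ω → ℝ}
    (h : iIndepFun f μ) (hmeas : ∀ i, Measurable (f i)) (hint : ∀ i, Integrable (f i) μ)
    (s : Finset ι) : Integrable (fun ω => ∏ i ∈ s, f i ω) μ := by
  classical
  induction s using Finset.induction with
  | empty =>
    have := h.isProbabilityMeasure
    simp only [Finset.prod_empty]
    exact integrable_const 1
  | insert i s hi ih =>
    have := (h.indepFun_finsetProd_of_notMem hmeas hi).integrable_mul
      (by rwa [Finset.prod_fn]) (hint i)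
    convert this using 1
    funext ω
    rw [Finset.prod_insert hi, Pi.mul_apply, Finset.prod_apply, mul_comm]

theorem IndepFun.integral_indicator_preimage {β : Type*} [MeasurableSpace β]
    {I : Ω → β} {Y : Ω → ℝ} (h : IndepFun I Y μ) (hI : Measurable I)
    (hY : AEStronglyMeasurable Y μ) {B : Set β} (hB : MeasurableSet B) :
    ∫ ω, (I ⁻¹' B).indicator Y ω ∂μ = μ.real (I ⁻¹' B) * ∫ ω, Y ω ∂μ := by
  have hφ : Measurable (B.indicator (1 : β → ℝ)) := measurable_one.indicator hB
  calc ∫ ω, (I ⁻¹' B).indicator Y ω ∂μ = ∫ ω, B.indicator 1 (I ω) * Y ω ∂μ := by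
        congr 1 with ω
        by_cases hω : I ω ∈ B <;> simp [hω]
    _ = (∫ ω, B.indicator 1 (I ω) ∂μ) * ∫ ω, Y ω ∂μ :=
        (h.comp hφ measurable_id).integral_mul_eq_mul_integral
          (hφ.comp hI).aestronglyMeasurable hY
    _ = μ.real (I ⁻¹' B) * ∫ ω, Y ω ∂μ := by
        rw [← integral_indicator_one (hI hB)]
        congr 2 with ω

end ProbabilityTheory

section Resampling

variable {Ω : Type*} {X Xhat : ℕ → Ω → ℝ} {I : Ω → ℝ}

/-- The paper's `X^{(I)}`. -/
noncomputable def resampleAt (I : Ω → ℝ) (X Xhat : ℕ → Ω → ℝ) (k : ℕ) (ω : Ω) : ℝ :=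
  if I ω = k then Xhat k ω else X k ω

theorem prod_resampleAt_eq (s : Finset ℕ) :
    (fun ω => ∏ k ∈ s, resampleAt I X Xhat k ω)
      = (fun ω => ∏ k ∈ s, X k ω) * (fun ω => 1 - ∑ j ∈ s, {ω | I ω = j}.indicator 1 ω)
        + ∑ j ∈ s, (fun ω => ∏ k ∈ s.erase j, X k ω) * {ω | I ω = j}.indicator (Xhat j) := by
  funext ω
  simp only [Finset.sum_apply, Pi.add_apply, Pi.mul_apply, resampleAt, Set.indicator_apply,
    Set.mem_ofPred_eq, Pi.one_apply]
  exact Finset.prod_ite_eq_add_sum s Nat.cast_injective.injOn (I ω) _ _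

variable {mX mT : MeasurableSpace Ω} [mΩ : MeasurableSpace Ω] {μ : Measure Ω}

theorem integrable_prod_resampleAt [IsFiniteMeasure μ] (hmT : mT ≤ mΩ) (hind : Indep mX mT μ)
    (hX : ∀ k, Measurable[mX] (X k)) (hXhat : ∀ k, Measurable[mT] (Xhat k))
    (hI : Measurable[mT] I) (hXprod : ∀ s : Finset ℕ, Integrable (fun ω => ∏ k ∈ s, X k ω) μ)
    (hXhat_int : ∀ k, Integrable (Xhat k) μ) (s : Finset ℕ) :
    Integrable (fun ω => ∏ k ∈ s, resampleAt I X Xhat k ω) μ := by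
  have hIs (j : ℕ) : MeasurableSet[mT] {ω | I ω = j} := hI (measurableSet_singleton _)
  rw [prod_resampleAt_eq]
  refine (hind.integrable_mul (Finset.measurable_prod _ fun k _ => hX k) ?_ (hXprod s) ?_).add
    (integrable_finsetSum' _ fun j _ =>
      hind.integrable_mul (Finset.measurable_prod _ fun k _ => hX k) ?_ (hXprod _) ?_)
  · exact Measurable.sub measurable_const (Finset.measurable_sum _ fun j _ =>
      measurable_const.indicator (hIs j))
  · exact (integrable_const 1).sub (integrable_finsetSum _ fun j _ =>
      (integrable_const 1).indicator (hmT _ (hIs j)))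
  · exact (hXhat j).indicator (hIs j)
  · exact (hXhat_int j).indicator (hmT _ (hIs j))

theorem condExp_prod_resampleAt [IsProbabilityMeasure μ] (hmX : mX ≤ mΩ) (hmT : mT ≤ mΩ)
    (hind : Indep mX mT μ) (hX : ∀ k, Measurable[mX] (X k))
    (hXhat : ∀ k, Measurable[mT] (Xhat k)) (hI : Measurable[mT] I)
    (hXprod : ∀ s : Finset ℕ, Integrable (fun ω => ∏ k ∈ s, X k ω) μ)
    (hXhat_int : ∀ k, Integrable (Xhat k) μ) (hXhat_mean : ∀ k, ∫ ω, Xhat k ω ∂μ = 0)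
    (hIXhat : ∀ k, IndepFun I (Xhat k) μ) {c : ℝ} {s : Finset ℕ}
    (hc : ∀ k ∈ s, μ.real {ω | I ω = k} = c) :
    μ[fun ω => ∏ k ∈ s, resampleAt I X Xhat k ω | mX]
      =ᵐ[μ] fun ω => (1 - s.card * c) * ∏ k ∈ s, X k ω := by
  have hIs (j : ℕ) : MeasurableSet[mT] {ω | I ω = j} := hI (measurableSet_singleton _)
  have hprod (t : Finset ℕ) : Measurable[mX] fun ω => ∏ k ∈ t, X k ω :=
    Finset.measurable_prod _ fun k _ => hX k
  set W : Ω → ℝ := fun ω => 1 - ∑ j ∈ s, {ω | I ω = j}.indicator 1 ω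
  have hWm : Measurable[mT] W := Measurable.sub measurable_const
    (Finset.measurable_sum _ fun j _ => measurable_const.indicator (hIs j))
  have hone (j : ℕ) : Integrable ({ω | I ω = j}.indicator (1 : Ω → ℝ)) μ :=
    (integrable_const 1).indicator (hmT _ (hIs j))
  have hWi : Integrable W μ := (integrable_const 1).sub (integrable_finsetSum _ fun j _ => hone j)
  have hWe : ∫ ω, W ω ∂μ = 1 - s.card * c := by
    rw [integral_sub (integrable_const 1) (integrable_finsetSum _ fun j _ => hone j),
      integral_finsetSum _ fun j _ => hone j]
    simp [integral_indicator_one (hmT _ (hIs _)), Finset.sum_congr rfl hc]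
  have hVm (j : ℕ) : Measurable[mT] ({ω | I ω = j}.indicator (Xhat j)) :=
    (hXhat j).indicator (hIs j)
  have hVi (j : ℕ) : Integrable ({ω | I ω = j}.indicator (Xhat j)) μ :=
    (hXhat_int j).indicator (hmT _ (hIs j))
  have hVe (j : ℕ) : ∫ ω, {ω | I ω = j}.indicator (Xhat j) ω ∂μ = 0 := by
    rw [show {ω | I ω = j} = I ⁻¹' {(j : ℝ)} from rfl, (hIXhat j).integral_indicator_preimage
      (hI.mono hmT le_rfl) (hXhat_int j).aestronglyMeasurable (measurableSet_singleton _),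
      hXhat_mean, mul_zero]
  rw [prod_resampleAt_eq]
  filter_upwards [condExp_add (hind.integrable_mul (hprod s) hWm (hXprod s) hWi)
      (integrable_finsetSum' _ fun j _ => hind.integrable_mul (hprod _) (hVm j) (hXprod _) (hVi j))
      mX,
    hind.condExp_mul hmX hmT (hprod s) hWm (hXprod s) hWi,
    condExp_finsetSum (fun j _ => hind.integrable_mul (hprod _) (hVm j) (hXprod _) (hVi j)) mX,
    ae_all_iff.2 fun j => hind.condExp_mul hmX hmT (hprod (s.erase j)) (hVm j) (hXprod _) (hVi j)]
    with ω h1 h2 h3 h4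
  rw [h1, Pi.add_apply, h2, h3, Finset.sum_apply,
    Finset.sum_eq_zero fun j _ => by rw [h4 j, hVe, mul_zero], hWe, add_zero, mul_comm]

end Resampling

section HomogeneousSums

variable {Ω : Type*} {p N : ℕ} {f : (Fin p → ℕ) → ℝ}

theorem homSum_eq_sum_smul_prod_image (hf : ∀ i, ¬ Function.Injective i → f i = 0)
    (Y : ℕ → Ω → ℝ) :
    homSum p N f Y = ∑ i : Fin p → Fin N,
      f (fun k => i k) • fun ω => ∏ n ∈ Finset.univ.image (fun k => (i k : ℕ)), Y n ω := by
  funext ω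
  simp only [homSum, Finset.sum_apply, Pi.smul_apply, smul_eq_mul]
  refine Finset.sum_congr rfl fun i _ => ?_
  by_cases hi : Function.Injective fun k => (i k : ℕ)
  · rw [Finset.prod_image hi.injOn]
  · rw [hf _ hi, zero_mul, zero_mul]

variable [MeasurableSpace Ω] {μ : Measure Ω}

theorem condExp_homSum_of_condExp_prod (hf : ∀ i, ¬ Function.Injective i → f i = 0)
    {m : MeasurableSpace Ω} {Y Z : ℕ → Ω → ℝ} (c : ℕ → ℝ)
    (hint : ∀ s : Finset ℕ, Integrable (fun ω => ∏ n ∈ s, Y n ω) μ)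
    (hcond : ∀ s ⊆ Finset.range N,
      μ[fun ω => ∏ n ∈ s, Y n ω | m] =ᵐ[μ] fun ω => c s.card * ∏ n ∈ s, Z n ω) :
    μ[homSum p N f Y | m] =ᵐ[μ] fun ω => c p * homSum p N f Z ω := by
  rw [homSum_eq_sum_smul_prod_image hf, homSum_eq_sum_smul_prod_image hf]
  set S : (Fin p → Fin N) → Finset ℕ := fun i => Finset.univ.image fun k => (i k : ℕ)
  set a : (Fin p → Fin N) → ℝ := fun i => f fun k => i k
  have hterm (i : Fin p → Fin N) : μ[a i • fun ω => ∏ n ∈ S i, Y n ω | m]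
      =ᵐ[μ] fun ω => c p * (a i * ∏ n ∈ S i, Z n ω) := by
    have hsub : S i ⊆ Finset.range N := by simp [S, Finset.subset_iff]
    filter_upwards [condExp_smul (a i) (fun ω => ∏ n ∈ S i, Y n ω) m, hcond _ hsub] with ω h1 h2
    rw [h1, Pi.smul_apply, h2, smul_eq_mul]
    by_cases hi : Function.Injective fun k => (i k : ℕ)
    · rw [Finset.card_image_of_injective _ hi, Finset.card_univ, Fintype.card_fin]
      ring
    · simp [a, hf _ hi]
  show μ[∑ i, a i • fun ω => ∏ n ∈ S i, Y n ω | m]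
    =ᵐ[μ] fun ω => c p * (∑ i, a i • fun ω => ∏ n ∈ S i, Z n ω) ω
  filter_upwards [condExp_finsetSum (s := Finset.univ) (fun i _ => (hint (S i)).smul (a i)) m,
    ae_all_iff.2 hterm] with ω h1 h2
  rw [h1, Finset.sum_apply, Finset.sum_apply, Finset.mul_sum]
  simp only [h2, Pi.smul_apply, smul_eq_mul]

end HomogeneousSums

theorem stmt9_general {Ω : Type*} [MeasurableSpace Ω] (μ : Measure Ω) [IsProbabilityMeasure μ]
    (m : ℕ)
    (X Xhat : ℕ → Ω → ℝ) (I : Ω → ℝ)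
    (hXmeas : ∀ k, Measurable (X k)) (hXhatmeas : ∀ k, Measurable (Xhat k))
    (hImeas : Measurable I)
    (hXint : ∀ k, Integrable (X k) μ) (hXmean : ∀ k, ∫ ω, X k ω ∂μ = 0)
    (hIndep : iIndepFun
      (Sum.elim X (Sum.elim Xhat (fun _ : Unit => I))) μ)
    (hcopy : ∀ k, μ.map (Xhat k) = μ.map (X k))
    (hIunif : ∀ k : ℕ, k < m → μ {ω | I ω = (k : ℝ)} = (m : ℝ≥0∞)⁻¹)
    (p : ℕ)
    (f : (Fin p → ℕ) → ℝ) (hker : IsKernel f) :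
    μ[homSum p m f (fun k ω => if I ω = (k : ℝ) then Xhat k ω else X k ω) |
        ⨆ i, MeasurableSpace.comap (X i) inferInstance]
      =ᵐ[μ] fun ω => (1 - (p : ℝ) / m) * homSum p m f X ω := by
  set Y : ℕ ⊕ Unit → Ω → ℝ := Sum.elim Xhat fun _ => I
  have hYmeas : ∀ j, Measurable (Y j) := fun j => Sum.rec hXhatmeas (fun _ => hImeas) j
  have hind := hIndep.indep_iSup_comap_sumElim hXmeas hYmeas
  have hX (k : ℕ) := Measurable.of_comap_le
    (le_iSup (fun i => MeasurableSpace.comap (X i) inferInstance) k)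
  have hXhat (k : ℕ) := Measurable.of_comap_le
    (le_iSup (fun j => MeasurableSpace.comap (Y j) inferInstance) (.inl k))
  have hI := Measurable.of_comap_le
    (le_iSup (fun j => MeasurableSpace.comap (Y j) inferInstance) (.inr ()))
  have hident (k : ℕ) : IdentDistrib (Xhat k) (X k) μ μ :=
    ⟨(hXhatmeas k).aemeasurable, (hXmeas k).aemeasurable, hcopy k⟩
  have hXprod := (hIndep.precomp Sum.inl_injective).integrable_finsetProd hXmeas hXint
  have hXhat_int (k : ℕ) := (hident k).integrable_iff.2 (hXint k)
  have hXhat_mean (k : ℕ) := (hident k).integral_eq.trans (hXmean k)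
  have hIXhat (k : ℕ) : IndepFun I (Xhat k) μ :=
    hIndep.indepFun (i := .inr (.inr ())) (j := .inr (.inl k)) (by simp)
  have hmX := iSup_le fun k => (hXmeas k).comap_le
  have hmT := iSup_le fun j => (hYmeas j).comap_le
  have hIprob (k : ℕ) (hk : k ∈ Finset.range m) : μ.real {ω | I ω = k} = (m : ℝ)⁻¹ := by
    simp [measureReal_def, hIunif k (Finset.mem_range.1 hk)]
  rw [div_eq_mul_inv]
  exact condExp_homSum_of_condExp_prod hker.2 (fun n => 1 - n * (m : ℝ)⁻¹)
    (integrable_prod_resampleAt hmT hind hX hXhat hI hXprod hXhat_int)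
    fun s hs => condExp_prod_resampleAt hmX hmT hind hX hXhat hI hXprod hXhat_int hXhat_mean hIXhat
      fun k hk => hIprob k (hs hk)

/-- **Conditional expectation for the random-coordinate exchangeable pair.** Let `X` be an
independent centered integrable sequence, `X̂` an independent copy, and `I` uniform on
`{0, …, m-1}` (encoded as a real-valued random variable), all mutually independent. With
`X^{(I)}_k = X_k 1{I ≠ k} + X̂_k 1{I = k}`, for every kernel `f` of order `p` with
`1 ≤ p ≤ m` supported in `{0, …, m-1}^p`, one has
`E[Q_p(f; X^{(I)}) | σ(X)] = (1 - p/m) Q_p(f; X)` almost surely. -/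
theorem stmt9 {Ω : Type*} [MeasurableSpace Ω] (μ : Measure Ω) [IsProbabilityMeasure μ]
    (m : ℕ) (hm : 1 ≤ m)
    (X Xhat : ℕ → Ω → ℝ) (I : Ω → ℝ)
    (hXmeas : ∀ k, Measurable (X k)) (hXhatmeas : ∀ k, Measurable (Xhat k))
    (hImeas : Measurable I)
    (hXint : ∀ k, Integrable (X k) μ) (hXmean : ∀ k, ∫ ω, X k ω ∂μ = 0)
    (hIndep : iIndepFun
      (Sum.elim X (Sum.elim Xhat (fun _ : Unit => I))) μ)
    (hcopy : ∀ k, μ.map (Xhat k) = μ.map (X k))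
    (hIunif : ∀ k : ℕ, k < m → μ {ω | I ω = (k : ℝ)} = (m : ℝ≥0∞)⁻¹)
    (hIsupp : ∀ᵐ ω ∂μ, ∃ k : ℕ, k < m ∧ I ω = (k : ℝ))
    (p : ℕ) (hp1 : 1 ≤ p) (hpm : p ≤ m)
    (f : (Fin p → ℕ) → ℝ) (hker : IsKernel f)
    (hsupp : ∀ i : Fin p → ℕ, (∃ j, m ≤ i j) → f i = 0) :
    μ[homSum p m f (fun k ω => if I ω = (k : ℝ) then Xhat k ω else X k ω) |
        ⨆ i, MeasurableSpace.comap (X i) inferInstance]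
      =ᵐ[μ] fun ω => (1 - (p : ℝ) / m) * homSum p m f X ω :=
  stmt9_general μ m X Xhat I hXmeas hXhatmeas hImeas hXint hXmean hIndep hcopy hIunif p f hker
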